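/- Let (W,ρ) be a finite-dimensional irreducible gl_N-module, and let 𝒫 ⊆ W^N be the set of tuples (w_1,…,w_N) satisfying ρ(E^{ca}) w_b + ρ(E^{ba}) w_c = δ_{ca} w_b + δ_{ba} w_c for all a, b, c ∈ {1,…,N}. Then the subspace of T(W) spanned by the vectors q^r ⊗ (r_1 w_1 + ⋯ + r_N w_N), for r ∈ ℤ^N and (w_1,…,w_N) ∈ 𝒫, is a 𝒱_N-submodule of the tensor module T(W). -/
import Mathlib

noncomputable section

/-- The tensor module `T(W) = ℂ[q_1^{±1},…,q_N^{±1}] ⊗ W`, with `q^μ ⊗ w` represented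
as `Finsupp.single μ w`. -/
abbrev TM (N : ℕ) (W : Type*) [AddCommGroup W] [Module ℂ W] : Type _ :=
  (Fin N → ℤ) →₀ W

/-- The action of `t^r d_a` on the tensor module `T(W,γ)`, where the `gl_N`-module
structure on `W` is encoded by the operators `ρ p a` representing the matrix units
`E^{pa}`. -/
noncomputable def tact {N : ℕ} {W : Type*} [AddCommGroup W] [Module ℂ W]
    (ρ : Fin N → Fin N → Module.End ℂ W) (γ : Fin N → ℂ)
    (r : Fin N → ℤ) (a : Fin N) : Module.End ℂ (TM N W) :=
  Finsupp.lsum ℂ fun μ => (Finsupp.lsingle (μ + r) : W →ₗ[ℂ] TM N W) ∘ₗ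
    ((γ a + (μ a : ℂ)) • (LinearMap.id : W →ₗ[ℂ] W) + ∑ p : Fin N, (r p : ℂ) • ρ p a)

/-- The family of operators `ρ p a` is a representation of `gl_N`. -/
def IsGLRep {N : ℕ} {W : Type*} [AddCommGroup W] [Module ℂ W]
    (ρ : Fin N → Fin N → Module.End ℂ W) : Prop :=
  ∀ p a b c, ⁅ρ p a, ρ b c⁆ =
    (if a = b then ρ p c else 0) - (if c = p then ρ b a else 0)

section Aux

variable {N : ℕ} {W : Type*} [AddCommGroup W] [Module ℂ W]

/-- The defining condition for the set `𝒫`. -/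
def Pcond (ρ : Fin N → Fin N → Module.End ℂ W) (w : Fin N → W) : Prop :=
  ∀ a b c : Fin N, ρ c a (w b) + ρ b a (w c) =
    (if c = a then w b else 0) + (if b = a then w c else 0)

lemma indic (P : Prop) [Decidable P] (x : W) :
    (if P then x else 0) = (if P then (1:ℂ) else 0) • x := by
  split <;> simp

lemma comm' {ρ : Fin N → Fin N → Module.End ℂ W} (hρ : IsGLRep ρ)
    (x y p a : Fin N) (u : W) :
    ρ x y (ρ p a u) = ρ p a (ρ x y u)
      + (if p = y then (1:ℂ) else 0) • ρ x a u
      - (if x = a then (1:ℂ) else 0) • ρ p y u := by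
  have h := LinearMap.congr_fun (hρ x y p a) u
  simp only [Ring.lie_def, LinearMap.sub_apply, Module.End.mul_apply,
    LinearMap.zero_apply] at h
  rcases eq_or_ne p y with h1 | h1 <;> rcases eq_or_ne x a with h2 | h2
  · subst h1; subst h2
    simp only [if_pos rfl, eq_self_iff_true, if_true, ite_true,
      LinearMap.sub_apply, one_smul] at h ⊢
    linear_combination (norm := module) h
  · subst h1
    simp only [if_pos rfl, eq_self_iff_true, if_true, ite_true, if_neg h2,
      if_neg (Ne.symm h2), LinearMap.sub_apply, LinearMap.zero_apply, one_smul,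
      zero_smul, sub_zero] at h ⊢
    linear_combination (norm := module) h
  · subst h2
    simp only [if_pos rfl, eq_self_iff_true, if_true, ite_true, if_neg h1,
      if_neg (Ne.symm h1), LinearMap.sub_apply, LinearMap.zero_apply,
      LinearMap.neg_apply, one_smul, zero_smul, add_zero, zero_sub] at h ⊢
    linear_combination (norm := module) h
  · simp only [if_neg h1, if_neg h2, if_neg (Ne.symm h1), if_neg (Ne.symm h2),
      LinearMap.zero_apply, zero_smul, sub_zero, add_zero, sub_self] at h ⊢
    linear_combination (norm := module) h

/-- The key lemma: the "defect" tuples `q ↦ ρ p a (w q) − δ_{qa} w p` again lie in `𝒫`. -/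
lemma keyP {ρ : Fin N → Fin N → Module.End ℂ W} (hρ : IsGLRep ρ)
    {w : Fin N → W} (hw : Pcond ρ w) (p a : Fin N) :
    Pcond ρ (fun q => ρ p a (w q) - if q = a then w p else 0) := by
  intro e b c
  dsimp only
  have h1 := hw e b c
  have h2 := hw a b c
  have h3 := hw e b p
  have h4 := hw e c p
  have c1 := comm' hρ c e p a (w b)
  have c2 := comm' hρ b e p a (w c)
  rw [indic (c = e) (w b), indic (b = e) (w c)] at h1
  have h1' := congrArg (ρ p a) h1
  simp only [map_add, map_smul] at h1'
  rw [indic (c = a) (w b), indic (b = a) (w c)] at h2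
  rw [indic (p = e) (w b), indic (b = e) (w p)] at h3
  rw [indic (p = e) (w c), indic (c = e) (w p)] at h4
  rw [indic (b = a) (w p), indic (c = a) (w p)]
  rw [indic (c = e) (ρ p a (w b) - (if b = a then (1:ℂ) else 0) • w p),
      indic (b = e) (ρ p a (w c) - (if c = a then (1:ℂ) else 0) • w p)]
  simp only [map_sub, map_smul]
  linear_combination (norm := module) c1 + c2 + h1'
    + (if p = e then (1:ℂ) else 0) • h2
    - (if c = a then (1:ℂ) else 0) • h3
    - (if b = a then (1:ℂ) else 0) • h4

lemma Pcond_smul {ρ : Fin N → Fin N → Module.End ℂ W} {w : Fin N → W}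
    (t : ℂ) (hw : Pcond ρ w) : Pcond ρ (fun q => t • w q) := by
  intro a b c
  dsimp only
  simp only [map_smul]
  rw [← smul_add, hw a b c]
  simp [smul_add, smul_ite, smul_zero]

lemma Pcond_add {ρ : Fin N → Fin N → Module.End ℂ W} {w₁ w₂ : Fin N → W}
    (h₁ : Pcond ρ w₁) (h₂ : Pcond ρ w₂) : Pcond ρ (fun q => w₁ q + w₂ q) := by
  intro a b c
  dsimp only
  have e₁ := h₁ a b c
  have e₂ := h₂ a b c
  simp only [map_add]
  split_ifs at e₁ e₂ ⊢ <;> linear_combination (norm := module) e₁ + e₂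

lemma Pcond_sum {ρ : Fin N → Fin N → Module.End ℂ W} {u : Fin N → Fin N → W}
    (hu : ∀ p, Pcond ρ (u p)) : Pcond ρ (fun q => ∑ p, u p q) := by
  intro a b c
  dsimp only
  simp only [map_sum]
  rw [← Finset.sum_add_distrib, Finset.sum_congr rfl (fun p _ => hu p a b c),
    Finset.sum_add_distrib]
  congr 1 <;> split_ifs with h <;> simp

lemma sym_trick {ρ : Fin N → Fin N → Module.End ℂ W} {w : Fin N → W}
    (hw : Pcond ρ w) (a : Fin N) (c : Fin N → Fin N → ℂ)
    (hc : ∀ p q, c p q = c q p) :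
    ∑ p, ∑ q, c p q • ρ p a (w q) = ∑ p, c p a • w p := by
  have hswap : ∑ p, ∑ q, c p q • ρ p a (w q) = ∑ p, ∑ q, c q p • ρ q a (w p) :=
    Finset.sum_comm
  have hdouble : (∑ p, ∑ q, c p q • ρ p a (w q)) + (∑ p, ∑ q, c p q • ρ p a (w q))
      = ∑ p, ∑ q, c p q • ((if p = a then w q else 0) + (if q = a then w p else 0)) := by
    nth_rewrite 2 [hswap]
    rw [← Finset.sum_add_distrib]
    refine Finset.sum_congr rfl fun p _ => ?_
    rw [← Finset.sum_add_distrib]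
    refine Finset.sum_congr rfl fun q _ => ?_
    rw [hc q p, ← smul_add, hw a q p]
  have hrhs : ∑ p, ∑ q, c p q • ((if p = a then w q else 0) + (if q = a then w p else 0))
      = (∑ p, c p a • w p) + (∑ p, c p a • w p) := by
    simp only [smul_add, smul_ite, smul_zero, Finset.sum_add_distrib]
    congr 1
    · rw [Finset.sum_comm]
      simp only [Finset.sum_ite_eq', Finset.mem_univ, if_true]
      exact Finset.sum_congr rfl fun q _ => by rw [hc a q]
    · simp only [Finset.sum_ite_eq', Finset.mem_univ, if_true]
  have h2 : (2:ℂ) • (∑ p, ∑ q, c p q • ρ p a (w q)) = (2:ℂ) • ∑ p, c p a • w p := by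
    rw [two_smul, two_smul, hdouble, hrhs]
  exact smul_right_injective W two_ne_zero h2

lemma main_id {ρ : Fin N → Fin N → Module.End ℂ W} {w : Fin N → W}
    (hw : Pcond ρ w) (R S : Fin N → ℂ) (a : Fin N) :
    R a • (∑ q, R q • w q) + ∑ p, S p • ρ p a (∑ q, R q • w q)
      = ∑ q, (R q + S q) •
          (R a • w q + ∑ p, S p • (ρ p a (w q) - if q = a then w p else 0)) := by
  have hS : ∑ p, ∑ q, (S p * S q) • ρ p a (w q) = ∑ p, (S p * S a) • w p :=
    sym_trick hw a _ (fun p q => by ring)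
  have hX1 : R a • (∑ q, R q • w q) = ∑ q, (R a * R q) • w q := by
    simp only [Finset.smul_sum, smul_smul]
  have hX2 : ∑ p, S p • ρ p a (∑ q, R q • w q) = ∑ p, ∑ q, (S p * R q) • ρ p a (w q) := by
    simp only [map_sum, map_smul, Finset.smul_sum, smul_smul]
  have hq : ∀ q : Fin N, (R q + S q) •
      (R a • w q + ∑ p, S p • (ρ p a (w q) - if q = a then w p else 0))
      = ((R q + S q) * R a) • w q + (∑ p, ((R q + S q) * S p) • ρ p a (w q))
        - (if q = a then ∑ p, ((R q + S q) * S p) • w p else 0) := by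
    intro q
    rcases eq_or_ne q a with h | h
    · subst h
      simp only [if_pos rfl, eq_self_iff_true, if_true, ite_true, smul_add,
        smul_sub, smul_smul, Finset.smul_sum, Finset.sum_sub_distrib]
      module
    · simp only [if_neg h, smul_add, smul_sub, smul_smul, Finset.smul_sum,
        sub_zero]
      try module
  have hB : ∑ q, ∑ p, ((R q + S q) * S p) • ρ p a (w q)
      = (∑ p, ∑ q, (S p * R q) • ρ p a (w q)) + ∑ p, ∑ q, (S p * S q) • ρ p a (w q) := by
    rw [Finset.sum_comm, ← Finset.sum_add_distrib]
    refine Finset.sum_congr rfl fun p _ => ?_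
    rw [← Finset.sum_add_distrib]
    refine Finset.sum_congr rfl fun q _ => ?_
    module
  have hC : ∑ q, (if q = a then ∑ p, ((R q + S q) * S p) • w p else 0)
      = ∑ p, ((R a + S a) * S p) • w p := by
    simp only [Finset.sum_ite_eq', Finset.mem_univ, if_true]
  have hfinal : ∑ q, (R a * R q) • w q
      = (∑ q, ((R q + S q) * R a) • w q) + (∑ q, (S q * S a) • w q)
        - ∑ q, ((R a + S a) * S q) • w q := by
    rw [← Finset.sum_add_distrib, ← Finset.sum_sub_distrib]
    refine Finset.sum_congr rfl fun q _ => ?_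
    module
  calc R a • (∑ q, R q • w q) + ∑ p, S p • ρ p a (∑ q, R q • w q)
      = ∑ q, (R a * R q) • w q + ∑ p, ∑ q, (S p * R q) • ρ p a (w q) := by
        rw [hX1, hX2]
    _ = ∑ q, ((R q + S q) • (R a • w q + ∑ p, S p • (ρ p a (w q) - if q = a then w p else 0))) := by
        rw [Finset.sum_congr rfl (fun q _ => hq q), Finset.sum_sub_distrib,
          Finset.sum_add_distrib, hB, hC, hS, hfinal]
        module

lemma tact_single {ρ : Fin N → Fin N → Module.End ℂ W} (s r : Fin N → ℤ)
    (a : Fin N) (x : W) :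
    tact ρ (0 : Fin N → ℂ) s a (Finsupp.single r x)
      = Finsupp.single (r + s) (((r a : ℂ)) • x + ∑ p, ((s p : ℂ)) • ρ p a x) := by
  simp [tact]

end Aux

/-- Let `𝒫 ⊆ W^N` be the set of tuples `(w_1,…,w_N)` satisfying
`ρ(E^{ca}) w_b + ρ(E^{ba}) w_c = δ_{ca} w_b + δ_{ba} w_c` for all `a,b,c`.  Then the
subspace of `T(W)` spanned by the vectors `q^r ⊗ (r_1 w_1 + ⋯ + r_N w_N)` for `r ∈ ℤ^N`
and `(w_1,…,w_N) ∈ 𝒫` is a `𝒱_N`-submodule of the tensor module `T(W) = T(W,0)`,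
i.e. it is invariant under all the operators `t^s d_a`. -/
theorem stmt17 {N : ℕ} {W : Type*} [AddCommGroup W] [Module ℂ W]
    [FiniteDimensional ℂ W] [Nontrivial W]
    (ρ : Fin N → Fin N → Module.End ℂ W) (hρ : IsGLRep ρ)
    (hirr : ∀ P : Submodule ℂ W, (∀ p a, ∀ w ∈ P, ρ p a w ∈ P) → P = ⊥ ∨ P = ⊤) :
    ∀ v ∈ Submodule.span ℂ
      {f : TM N W | ∃ (r : Fin N → ℤ) (w : Fin N → W),
        (∀ a b c : Fin N, ρ c a (w b) + ρ b a (w c) =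
          (if c = a then w b else 0) + (if b = a then w c else 0)) ∧
        f = Finsupp.single r (∑ p : Fin N, (r p : ℂ) • w p)},
      ∀ (s : Fin N → ℤ) (a : Fin N),
        tact ρ (0 : Fin N → ℂ) s a v ∈ Submodule.span ℂ
          {f : TM N W | ∃ (r : Fin N → ℤ) (w : Fin N → W),
            (∀ a b c : Fin N, ρ c a (w b) + ρ b a (w c) =
              (if c = a then w b else 0) + (if b = a then w c else 0)) ∧
            f = Finsupp.single r (∑ p : Fin N, (r p : ℂ) • w p)} := by
  intro v hv s a
  induction hv using Submodule.span_induction with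
  | mem f hf =>
      obtain ⟨r, w, hw, rfl⟩ := hf
      have hw' : Pcond ρ w := hw
      -- compute the action on the generator
      have hact : tact ρ (0 : Fin N → ℂ) s a
          (Finsupp.single r (∑ p : Fin N, (r p : ℂ) • w p))
          = Finsupp.single (r + s)
            (((r a : ℂ)) • (∑ p : Fin N, (r p : ℂ) • w p)
              + ∑ p, ((s p : ℂ)) • ρ p a (∑ q : Fin N, (r q : ℂ) • w q)) :=
        tact_single s r a _
      set v : Fin N → W := fun q =>
        ((r a : ℂ)) • w q + ∑ p, ((s p : ℂ)) • (ρ p a (w q) - if q = a then w p else 0)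
        with hvdef
      have hvP : Pcond ρ v :=
        Pcond_add (Pcond_smul _ hw')
          (Pcond_sum fun p => Pcond_smul _ (keyP hρ hw' p a))
      have hid := main_id hw' (fun q => ((r q : ℤ) : ℂ)) (fun p => ((s p : ℤ) : ℂ)) a
      apply Submodule.subset_span
      refine ⟨r + s, v, hvP, ?_⟩
      rw [hact]
      congr 1
      rw [hid]
      refine Finset.sum_congr rfl fun q _ => ?_
      have : (((r + s) q : ℤ) : ℂ) = ((r q : ℤ) : ℂ) + ((s q : ℤ) : ℂ) := by
        simp [Pi.add_apply]
      rw [this]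
  | zero => simpa using Submodule.zero_mem _
  | add x y _ _ hx hy =>
      rw [map_add]; exact Submodule.add_mem _ hx hy
  | smul t x _ hx =>
      rw [map_smul]; exact Submodule.smul_mem _ _ hx

end
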